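/- Let g_11 = z, g_12 = 0, g_22 = 1/z with z smooth and positive, and let σ^{11} = (ln z)/(2z), σ^{12} = σ^{21} = 0, σ^{22} = (ln z - 2)·z/2. Then the covariant divergence σ^{ij}_{;j} = ∂_j σ^{ij} + Γ^i_{jk} σ^{kj} + Γ^j_{jk} σ^{ik} vanishes identically (for i = 1, 2), i.e., the equilibrium equations hold. -/

import Mathlib

open scoped BigOperators

/-- Partial derivative in the `i`-th coordinate direction of a function `ℝ → ℝ → ℝ`. -/
noncomputable def pd (i : Fin 2) (f : ℝ → ℝ → ℝ) (x y : ℝ) : ℝ :=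
  if i = 0 then deriv (fun t => f t y) x else deriv (fun t => f x t) y

/-- The Christoffel symbols of the metric `g = z dx² + (1/z) dy²`:
`Γ¹₁₁ = z_x/(2z)`, `Γ¹₁₂ = Γ¹₂₁ = z_y/(2z)`, `Γ¹₂₂ = z_x/(2z³)`,
`Γ²₁₁ = −z z_y/2`, `Γ²₁₂ = Γ²₂₁ = −z_x/(2z)`, `Γ²₂₂ = −z_y/(2z)`. -/
noncomputable def Γc (z : ℝ → ℝ → ℝ) (k i j : Fin 2) (x y : ℝ) : ℝ :=
  if k = 0 then
    if i = 0 ∧ j = 0 then pd 0 z x y / (2 * z x y)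
    else if i = 1 ∧ j = 1 then pd 0 z x y / (2 * z x y ^ 3)
    else pd 1 z x y / (2 * z x y)
  else
    if i = 0 ∧ j = 0 then -(z x y * pd 1 z x y / 2)
    else if i = 1 ∧ j = 1 then -(pd 1 z x y / (2 * z x y))
    else -(pd 0 z x y / (2 * z x y))

/-- The contravariant stress tensor `σ^{11} = (ln z)/(2z)`, `σ^{22} = (ln z − 2)z/2`,
`σ^{12} = σ^{21} = 0`. -/
noncomputable def σc (z : ℝ → ℝ → ℝ) (i j : Fin 2) (x y : ℝ) : ℝ :=
  if i = 0 ∧ j = 0 then Real.log (z x y) / (2 * z x y)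
  else if i = 1 ∧ j = 1 then (Real.log (z x y) - 2) * z x y / 2
  else 0

lemma deriv_aux1 (g : ℝ → ℝ) {a : ℝ} (hg : DifferentiableAt ℝ g a) (h : 0 < g a) :
    deriv (fun t => Real.log (g t) / (2 * g t)) a
      = deriv g a * (1 - Real.log (g a)) / (2 * (g a) ^ 2) := by
  have hd := hg.hasDerivAt
  have h1 : HasDerivAt (fun t => Real.log (g t)) (deriv g a / g a) a := hd.log h.ne'
  have h2 : HasDerivAt (fun t => 2 * g t) (2 * deriv g a) a := hd.const_mul 2
  have h3 : HasDerivAt (fun t => Real.log (g t) / (2 * g t)) _ a := h1.div h2 (by positivity)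
  rw [h3.deriv]
  field_simp

lemma deriv_aux2 (g : ℝ → ℝ) {a : ℝ} (hg : DifferentiableAt ℝ g a) (h : 0 < g a) :
    deriv (fun t => (Real.log (g t) - 2) * g t / 2) a
      = deriv g a * (Real.log (g a) - 1) / 2 := by
  have hd := hg.hasDerivAt
  have h1 : HasDerivAt (fun t => Real.log (g t) - 2) (deriv g a / g a) a :=
    (hd.log h.ne').sub_const 2
  have h3 : HasDerivAt (fun t => (Real.log (g t) - 2) * g t / 2) _ a := (h1.mul hd).div_const 2
  rw [h3.deriv]
  field_simp
  ring

/-- For any smooth positive `z`, the covariant divergence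
`σ^{ij}_{;j} = ∂_j σ^{ij} + Γ^i_{jk} σ^{kj} + Γ^j_{jk} σ^{ik}` vanishes identically:
the equilibrium equations hold. -/
theorem stmt_10 (z : ℝ → ℝ → ℝ)
    (hsmooth : ContDiff ℝ (⊤ : ℕ∞) (Function.uncurry z))
    (hpos : ∀ x y : ℝ, 0 < z x y) (i : Fin 2) (x y : ℝ) :
    (∑ j : Fin 2, pd j (fun a b => σc z i j a b) x y)
      + (∑ j : Fin 2, ∑ k : Fin 2, Γc z i j k x y * σc z k j x y)
      + (∑ j : Fin 2, ∑ k : Fin 2, Γc z j j k x y * σc z i k x y) = 0 := by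
  have hz := hsmooth.differentiable (by simp)
  have hg0 : DifferentiableAt ℝ (fun t => z t y) x := by
    have : DifferentiableAt ℝ (fun t : ℝ => Function.uncurry z (t, y)) x :=
      DifferentiableAt.comp (g := Function.uncurry z) x (hz (x, y)) (differentiableAt_id.prodMk (differentiableAt_const y))
    exact this
  have hg1 : DifferentiableAt ℝ (fun t => z x t) y := by
    have : DifferentiableAt ℝ (fun t : ℝ => Function.uncurry z (x, t)) y :=
      DifferentiableAt.comp (g := Function.uncurry z) y (hz (x, y)) ((differentiableAt_const x).prodMk differentiableAt_id)
    exact this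
  have hc := hpos x y
  have hd00 : pd 0 (fun a b => σc z 0 0 a b) x y
      = pd 0 z x y * (1 - Real.log (z x y)) / (2 * (z x y) ^ 2) := by
    have he : (fun t => σc z 0 0 t y) = fun t => Real.log (z t y) / (2 * z t y) := by
      funext t; simp [σc]
    simp only [pd, if_pos rfl, he]
    exact deriv_aux1 (fun t => z t y) hg0 hc
  have hd11 : pd 1 (fun a b => σc z 1 1 a b) x y
      = pd 1 z x y * (Real.log (z x y) - 1) / 2 := by
    have he : (fun t => σc z 1 1 x t) = fun t => (Real.log (z x t) - 2) * z x t / 2 := by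
      funext t; simp [σc]
    have : (1 : Fin 2) ≠ 0 := by decide
    simp only [pd, if_neg this, he]
    exact deriv_aux2 (fun t => z x t) hg1 hc
  have hd01 : pd 1 (fun a b => σc z 0 1 a b) x y = 0 := by
    have he : (fun t => σc z 0 1 x t) = fun _ => (0 : ℝ) := by
      funext t; simp [σc]
    have : (1 : Fin 2) ≠ 0 := by decide
    simp only [pd, if_neg this, he, deriv_const]
  have hd10 : pd 0 (fun a b => σc z 1 0 a b) x y = 0 := by
    have he : (fun t => σc z 1 0 t y) = fun _ => (0 : ℝ) := by
      funext t; simp [σc]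
    simp [pd, he]
  fin_cases i
  · simp only [Fin.zero_eta, Fin.mk_one, Fin.isValue, Fin.sum_univ_two]
    rw [hd00, hd01]
    simp only [Γc, σc]
    norm_num
    field_simp
    ring
  · simp only [Fin.zero_eta, Fin.mk_one, Fin.isValue, Fin.sum_univ_two]
    rw [hd10, hd11]
    simp only [Γc, σc]
    norm_num
    field_simp
    ring
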